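/- arXiv:1805.06970 — 2 statements merged into one kernel-verified Lean document; each statement's English description precedes it below -/
import Mathlib

section
/- For the logistic sigmoid f(x) = e^x/(1+e^x) and any reals a, b, one has the mean value type bound |f'(a) - f'(b)| ≤ |a - b| · max{f'(a), f'(b)}. -/
/-! Since `f'(x) = 1 / (2 cosh (x / 2))²` and `cosh y ≤ cosh x · e^{|y - x|}`, the function
`log f'` is `1`-Lipschitz: `f'(a) ≤ f'(b) · e^{|a - b|}`. Hence
`f'(b) ≥ f'(a) · e^{-|a - b|} ≥ f'(a) · (1 - |a - b|)`, i.e. `f'(a) - f'(b) ≤ |a - b| · f'(a)`,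
and symmetrically with `a` and `b` exchanged. -/

noncomputable def logisticF : ℝ → ℝ := fun x => Real.exp x / (1 + Real.exp x)

open Real

lemma Real.cosh_le_cosh_mul_exp_abs_sub (x y : ℝ) : cosh y ≤ cosh x * exp |y - x| := by
  have h₁ : exp y ≤ exp x * exp |y - x| := by
    rw [← exp_add, exp_le_exp]; linarith [le_abs_self (y - x)]
  have h₂ : exp (-y) ≤ exp (-x) * exp |y - x| := by
    rw [← exp_add, exp_le_exp]; linarith [neg_abs_le (y - x)]
  rw [cosh_eq, cosh_eq]
  linarith

lemma sub_le_mul_of_le_mul_exp {x y t : ℝ} (hx : 0 ≤ x) (h : x ≤ y * exp t) : x - y ≤ t * x := by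
  have hy : x * exp (-t) ≤ y := by
    rw [exp_neg, ← div_eq_mul_inv, div_le_iff₀ (exp_pos t)]
    exact h
  nlinarith [add_one_le_exp (-t)]

lemma abs_sub_le_mul_max_of_le_mul_exp {x y t : ℝ} (ht : 0 ≤ t) (hx : 0 ≤ x) (hy : 0 ≤ y)
    (hxy : x ≤ y * exp t) (hyx : y ≤ x * exp t) : |x - y| ≤ t * max x y := by
  rw [abs_sub_le_iff]
  constructor
  · calc x - y ≤ t * x := sub_le_mul_of_le_mul_exp hx hxy
      _ ≤ t * max x y := mul_le_mul_of_nonneg_left (le_max_left x y) ht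
  · calc y - x ≤ t * y := sub_le_mul_of_le_mul_exp hy hyx
      _ ≤ t * max x y := mul_le_mul_of_nonneg_left (le_max_right x y) ht

lemma hasDerivAt_logisticF (x : ℝ) : HasDerivAt logisticF ((2 * cosh (x / 2)) ^ 2)⁻¹ x := by
  have hne : 1 + exp x ≠ 0 := by positivity
  refine ((hasDerivAt_exp x).div ((hasDerivAt_exp x).const_add 1) hne).congr_deriv ?_
  have hsq : exp x = exp (x / 2) ^ 2 := by rw [sq, ← exp_add, add_halves]
  rw [cosh_eq, exp_neg, hsq]
  have := exp_pos (x / 2)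
  field_simp
  ring

lemma deriv_logisticF (x : ℝ) : deriv logisticF x = ((2 * cosh (x / 2)) ^ 2)⁻¹ :=
  (hasDerivAt_logisticF x).deriv

lemma deriv_logisticF_le_mul_exp_abs_sub (a b : ℝ) :
    deriv logisticF a ≤ deriv logisticF b * exp |a - b| := by
  have hcosh : cosh (b / 2) ≤ cosh (a / 2) * exp |b / 2 - a / 2| :=
    cosh_le_cosh_mul_exp_abs_sub _ _
  have hexp : exp |b / 2 - a / 2| ^ 2 = exp |a - b| := by
    rw [← exp_nat_mul, abs_sub_comm, ← sub_div, abs_div, abs_two]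
    push_cast
    ring_nf
  have hsq : (2 * cosh (b / 2)) ^ 2 ≤ (2 * cosh (a / 2)) ^ 2 * exp |a - b| := by
    rw [← hexp]
    nlinarith [cosh_pos (b / 2)]
  rw [deriv_logisticF, deriv_logisticF, inv_mul_eq_div, ← one_div,
    div_le_div_iff₀ (by positivity) (by positivity)]
  linarith

theorem stmt2 (a b : ℝ) :
    |deriv logisticF a - deriv logisticF b|
      ≤ |a - b| * max (deriv logisticF a) (deriv logisticF b) := by
  have hpos (x : ℝ) : 0 ≤ deriv logisticF x := by rw [deriv_logisticF]; positivity
  refine abs_sub_le_mul_max_of_le_mul_exp (abs_nonneg _) (hpos a) (hpos b)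
    (deriv_logisticF_le_mul_exp_abs_sub a b) ?_
  rw [abs_sub_comm]
  exact deriv_logisticF_le_mul_exp_abs_sub b a
end

section
/- If (X, Y) is a centered bivariate Gaussian vector with Var(X) = Var(Y) = σ² ≤ 1 and Cov(X, Y) = σ²ρ with ρ ≥ 0, then E[tanh(X/2)·tanh(Y/2)] ≤ 6σ²ρ. -/
open Real MeasureTheory

lemma tanh_hasDerivAt (x : ℝ) : HasDerivAt Real.tanh ((Real.cosh x ^ 2)⁻¹) x := by
  have h : HasDerivAt (fun y => Real.sinh y / Real.cosh y)
      ((Real.cosh x * Real.cosh x - Real.sinh x * Real.sinh x) / (Real.cosh x) ^ 2) x :=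
    (Real.hasDerivAt_sinh x).div (Real.hasDerivAt_cosh x) (Real.cosh_pos x).ne'
  have h1 : (Real.cosh x * Real.cosh x - Real.sinh x * Real.sinh x) = 1 := by
    have := Real.cosh_sq_sub_sinh_sq x; nlinarith
  rw [h1] at h
  have heq : (fun y => Real.sinh y / Real.cosh y) = Real.tanh := by
    funext y; rw [Real.tanh_eq_sinh_div_cosh]
  rw [heq, one_div] at h; exact h

lemma tanh_lipschitz (a b : ℝ) : |Real.tanh a - Real.tanh b| ≤ |a - b| := by
  have := Convex.norm_image_sub_le_of_norm_deriv_le (𝕜 := ℝ) (f := Real.tanh) (s := Set.univ)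
    (C := 1) (fun x _ => (tanh_hasDerivAt x).differentiableAt)
    (fun x _ => by
      rw [(tanh_hasDerivAt x).deriv, Real.norm_eq_abs, abs_inv,
        abs_of_pos (by positivity : (0:ℝ) < Real.cosh x ^ 2), inv_le_one_iff₀]
      right
      nlinarith [Real.one_le_cosh x])
    convex_univ (Set.mem_univ b) (Set.mem_univ a)
  simpa using this

lemma abs_tanh_le (x : ℝ) : |Real.tanh x| ≤ |x| := by
  have := tanh_lipschitz x 0; simpa [Real.tanh_zero] using this

lemma abs_tanh_le_one (x : ℝ) : |Real.tanh x| ≤ 1 := by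
  rw [Real.tanh_eq_sinh_div_cosh, abs_div, abs_of_pos (Real.cosh_pos x),
    div_le_one (Real.cosh_pos x), abs_le]
  constructor
  · have h := Real.sinh_lt_cosh (-x)
    rw [Real.sinh_neg, Real.cosh_neg] at h; linarith
  · exact (Real.sinh_lt_cosh x).le

lemma continuous_tanh : Continuous Real.tanh := by
  have heq : (fun y => Real.sinh y / Real.cosh y) = Real.tanh := by
    funext y; rw [Real.tanh_eq_sinh_div_cosh]
  rw [← heq]
  exact Real.continuous_sinh.div Real.continuous_cosh (fun x => (Real.cosh_pos x).ne')

/-- Density of a centered bivariate Gaussian with unit variances and correlation `ρ`. -/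
noncomputable def biGaussDensity (ρ x y : ℝ) : ℝ :=
  (2 * Real.pi * Real.sqrt (1 - ρ ^ 2))⁻¹ *
    Real.exp (-(x ^ 2 - 2 * ρ * x * y + y ^ 2) / (2 * (1 - ρ ^ 2)))

/-- If `(X,Y) = (σU, σV)` with `(U,V)` standard correlated Gaussians with correlation `ρ ≥ 0`,
`Var X = Var Y = σ² ≤ 1` and `Cov(X,Y) = σ²ρ`, then `E[tanh(X/2)tanh(Y/2)] ≤ 6σ²ρ`. -/
theorem stmt12 (σ ρ : ℝ) (hσ : σ ^ 2 ≤ 1) (hρ0 : 0 ≤ ρ) (hρ1 : ρ ^ 2 < 1) :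
    ∫ q : ℝ × ℝ, Real.tanh (σ * q.1 / 2) * Real.tanh (σ * q.2 / 2) *
        biGaussDensity ρ q.1 q.2
      ≤ 6 * σ ^ 2 * ρ := by
  have hπ := Real.pi_pos
  have h1ρ : (0:ℝ) < 1 - ρ ^ 2 := by linarith
  set s : ℝ := Real.sqrt (1 - ρ ^ 2) with hs_def
  have hs2 : s ^ 2 = 1 - ρ ^ 2 := Real.sq_sqrt h1ρ.le
  have hs0 : 0 < s := Real.sqrt_pos.mpr h1ρ
  have hρlt1 : ρ < 1 := by nlinarith
  -- the standard Gaussian density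
  set φ : ℝ → ℝ := fun t => (Real.sqrt (2 * π))⁻¹ * Real.exp (-(1/2) * t ^ 2) with hφ_def
  have hφnn : ∀ t, 0 ≤ φ t := fun t => by positivity
  have hφcont : Continuous φ := by fun_prop
  have hφint : Integrable φ :=
    (integrable_exp_neg_mul_sq (by norm_num : (0:ℝ) < 1/2)).const_mul _
  have h2πsqrt : Real.sqrt (2*π) * Real.sqrt (2*π) = 2*π :=
    Real.mul_self_sqrt (by positivity)
  have hsqrt2πpos : 0 < Real.sqrt (2*π) := Real.sqrt_pos.mpr (by positivity)
  have hφ1 : ∫ t, φ t = 1 := by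
    simp only [hφ_def]
    rw [MeasureTheory.integral_const_mul, integral_gaussian]
    have : π / (1/2) = 2 * π := by ring
    rw [this]
    field_simp
  -- nonnegativity and continuity of the bivariate density
  have hDnn : ∀ x y : ℝ, 0 ≤ biGaussDensity ρ x y := by
    intro x y; unfold biGaussDensity; positivity
  have hDcont : Continuous (fun q : ℝ × ℝ => biGaussDensity ρ q.1 q.2) := by
    unfold biGaussDensity; fun_prop
  -- the integrand
  set H : ℝ × ℝ → ℝ := fun q => Real.tanh (σ * q.1 / 2) * Real.tanh (σ * q.2 / 2) *
    biGaussDensity ρ q.1 q.2 with hH_def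
  have hHcont : Continuous H := by
    apply Continuous.mul
    apply Continuous.mul
    · exact continuous_tanh.comp (by fun_prop)
    · exact continuous_tanh.comp (by fun_prop)
    · exact hDcont
  -- bound the density by a product Gaussian
  set a : ℝ := (2*(1+ρ))⁻¹ with ha_def
  have ha0 : 0 < a := by rw [ha_def]; positivity
  have hDle : ∀ x y : ℝ, biGaussDensity ρ x y ≤
      (2*π*s)⁻¹ * Real.exp (-a * x^2) * Real.exp (-a * y^2) := by
    intro x y
    unfold biGaussDensity
    rw [← hs_def]
    have hexp : (2*π*s)⁻¹ * Real.exp (-a * x^2) * Real.exp (-a * y^2)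
        = (2*π*s)⁻¹ * Real.exp (-a * x^2 + -a * y^2) := by rw [Real.exp_add]; ring
    rw [hexp]
    apply mul_le_mul_of_nonneg_left _ (by positivity)
    apply Real.exp_le_exp.mpr
    have key : (x^2 + y^2) / (2*(1+ρ)) ≤ (x^2 - 2*ρ*x*y + y^2) / (2*(1-ρ^2)) := by
      rw [div_le_div_iff₀ (by linarith) (by linarith)]
      nlinarith [sq_nonneg (x-y), sq_nonneg (x+y), mul_nonneg hρ0 (sq_nonneg (x-y))]
    have h1 : -a * x^2 + -a * y^2 = -((x^2+y^2) / (2*(1+ρ))) := by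
      rw [ha_def]; field_simp; ring
    rw [h1, neg_div]
    linarith
  -- integrability of H
  have hH_int : Integrable H := by
    apply Integrable.mono'
      (g := fun q : ℝ × ℝ => ((2*π*s)⁻¹ * Real.exp (-a * q.1^2)) * Real.exp (-a * q.2^2))
    · rw [Measure.volume_eq_prod]
      exact ((integrable_exp_neg_mul_sq ha0).const_mul _).mul_prod
        (integrable_exp_neg_mul_sq ha0)
    · exact hHcont.aestronglyMeasurable
    · refine Filter.Eventually.of_forall (fun q => ?_)
      rw [Real.norm_eq_abs, hH_def]
      calc |Real.tanh (σ * q.1 / 2) * Real.tanh (σ * q.2 / 2) * biGaussDensity ρ q.1 q.2|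
          = |Real.tanh (σ * q.1 / 2)| * |Real.tanh (σ * q.2 / 2)| * biGaussDensity ρ q.1 q.2 := by
            rw [abs_mul, abs_mul, abs_of_nonneg (hDnn _ _)]
        _ ≤ 1 * 1 * biGaussDensity ρ q.1 q.2 := by
            apply mul_le_mul_of_nonneg_right _ (hDnn _ _)
            exact mul_le_mul (abs_tanh_le_one _) (abs_tanh_le_one _) (abs_nonneg _) zero_le_one
        _ = biGaussDensity ρ q.1 q.2 := by ring
        _ ≤ (2*π*s)⁻¹ * Real.exp (-a * q.1^2) * Real.exp (-a * q.2^2) := hDle _ _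
        _ = ((2*π*s)⁻¹ * Real.exp (-a * q.1^2)) * Real.exp (-a * q.2^2) := by ring
  -- pointwise factorization after the substitution v = s*w + ρ*u
  have hc : s * (2*π*s)⁻¹ = (Real.sqrt (2*π))⁻¹ * (Real.sqrt (2*π))⁻¹ := by
    rw [show (Real.sqrt (2*π))⁻¹ * (Real.sqrt (2*π))⁻¹ = (2*π)⁻¹ by rw [← mul_inv, h2πsqrt]]
    field_simp
  have hpoint : ∀ u w : ℝ, s * (Real.tanh (σ*(s*w+ρ*u)/2) * biGaussDensity ρ u (s*w+ρ*u))
      = φ u * (Real.tanh (σ*(s*w+ρ*u)/2) * φ w) := by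
    intro u w
    unfold biGaussDensity
    rw [← hs_def]
    have hexp : -(u^2 - 2*ρ*u*(s*w+ρ*u) + (s*w+ρ*u)^2) / (2*(1-ρ^2))
        = -(1/2) * u^2 + -(1/2) * w^2 := by
      rw [div_eq_iff (by positivity : (2*(1-ρ^2)) ≠ 0)]
      linear_combination (-(w^2)) * hs2
    rw [hexp, Real.exp_add, hφ_def]
    simp only []
    rw [show s * (Real.tanh (σ*(s*w+ρ*u)/2) * ((2*π*s)⁻¹ *
        (Real.exp (-(1/2)*u^2) * Real.exp (-(1/2)*w^2))))
      = (s * (2*π*s)⁻¹) * (Real.tanh (σ*(s*w+ρ*u)/2) *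
        (Real.exp (-(1/2)*u^2) * Real.exp (-(1/2)*w^2))) by ring, hc]
    ring
  -- rewrite the inner integral
  have hinner_rw : ∀ u : ℝ, (∫ v, H (u, v)) =
      Real.tanh (σ*u/2) * (φ u * ∫ w, Real.tanh (σ*(s*w+ρ*u)/2) * φ w) := by
    intro u
    have e1 : ∀ v, H (u, v) =
        Real.tanh (σ*u/2) * (Real.tanh (σ*v/2) * biGaussDensity ρ u v) := by
      intro v; simp only [hH_def]; ring
    simp_rw [e1]
    rw [MeasureTheory.integral_const_mul]
    congr 1
    set G : ℝ → ℝ := fun v => Real.tanh (σ*v/2) * biGaussDensity ρ u v with hG_def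
    have h2 : ∫ x : ℝ, G (s*x + ρ*u) = |s⁻¹| • ∫ v, G v := by
      have h3 := Measure.integral_comp_mul_left (fun x => G (x + ρ*u)) s
      rw [integral_add_right_eq_self] at h3
      exact h3
    have h4 : ∫ v, G v = ∫ x : ℝ, s * G (s*x + ρ*u) := by
      rw [MeasureTheory.integral_const_mul, h2, abs_of_pos (inv_pos.mpr hs0), smul_eq_mul,
        ← mul_assoc, mul_inv_cancel₀ hs0.ne', one_mul]
    rw [h4]
    have h5 : ∀ x : ℝ, s * G (s*x + ρ*u) = φ u * (Real.tanh (σ*(s*x+ρ*u)/2) * φ x) := by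
      intro x
      simp only [hG_def]
      exact hpoint u x
    simp_rw [h5]
    rw [MeasureTheory.integral_const_mul]
  -- integrability of the shifted inner integrand
  have hint_shift : ∀ c : ℝ, Integrable (fun w : ℝ => Real.tanh (σ*(s*w+c)/2) * φ w) := by
    intro c
    apply Integrable.mono' hφint
    · exact ((continuous_tanh.comp (by fun_prop)).mul hφcont).aestronglyMeasurable
    · refine Filter.Eventually.of_forall (fun w => ?_)
      rw [Real.norm_eq_abs, abs_mul, abs_of_nonneg (hφnn w)]
      exact mul_le_of_le_one_left (hφnn w) (abs_tanh_le_one _)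
  -- odd function integrates to zero
  have hodd : ∫ w, Real.tanh (σ*(s*w)/2) * φ w = 0 := by
    have h := MeasureTheory.integral_neg_eq_self
      (fun w : ℝ => Real.tanh (σ*(s*w)/2) * φ w) volume
    have hneg : ∀ w : ℝ, Real.tanh (σ*(s*(-w))/2) * φ (-w)
        = -(Real.tanh (σ*(s*w)/2) * φ w) := by
      intro w
      rw [show σ*(s*(-w))/2 = -(σ*(s*w)/2) by ring, Real.tanh_neg, hφ_def]
      simp only [neg_sq]
      ring
    simp_rw [hneg] at h
    rw [integral_neg] at h
    linarith
  -- bound on the inner integral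
  have hinner_le : ∀ u : ℝ, |(∫ w, Real.tanh (σ*(s*w+ρ*u)/2) * φ w)| ≤ |σ| * ρ * |u| / 2 := by
    intro u
    have hint0 : Integrable (fun w : ℝ => Real.tanh (σ*(s*w)/2) * φ w) := by
      have := hint_shift 0
      simpa using this
    have hsub : (∫ w, Real.tanh (σ*(s*w+ρ*u)/2) * φ w)
        = ∫ w, (Real.tanh (σ*(s*w+ρ*u)/2) - Real.tanh (σ*(s*w)/2)) * φ w := by
      simp_rw [sub_mul]
      rw [integral_sub (hint_shift (ρ*u)) hint0, hodd, sub_zero]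
    rw [hsub]
    have hptw : ∀ w : ℝ, ‖(Real.tanh (σ*(s*w+ρ*u)/2) - Real.tanh (σ*(s*w)/2)) * φ w‖
        ≤ (|σ| * ρ * |u| / 2) * φ w := by
      intro w
      rw [Real.norm_eq_abs, abs_mul, abs_of_nonneg (hφnn w)]
      apply mul_le_mul_of_nonneg_right _ (hφnn w)
      calc |Real.tanh (σ*(s*w+ρ*u)/2) - Real.tanh (σ*(s*w)/2)|
          ≤ |σ*(s*w+ρ*u)/2 - σ*(s*w)/2| := tanh_lipschitz _ _
        _ = |σ| * ρ * |u| / 2 := by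
            rw [show σ*(s*w+ρ*u)/2 - σ*(s*w)/2 = (σ*ρ*u)/2 by ring, abs_div, abs_mul, abs_mul,
              abs_of_nonneg hρ0]
            norm_num
    have hb := norm_integral_le_of_norm_le (μ := volume)
      (f := fun w : ℝ => (Real.tanh (σ*(s*w+ρ*u)/2) - Real.tanh (σ*(s*w)/2)) * φ w)
      (g := fun w : ℝ => (|σ| * ρ * |u| / 2) * φ w) (hφint.const_mul _)
      (Filter.Eventually.of_forall hptw)
    rw [MeasureTheory.integral_const_mul, hφ1, mul_one] at hb
    exact (Real.norm_eq_abs _) ▸ hb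
  -- Fubini setup
  have hH_int' : Integrable H ((volume : Measure ℝ).prod volume) := by
    rwa [← Measure.volume_eq_prod]
  have hH_eq : ∫ q : ℝ × ℝ, H q = ∫ u, ∫ v, H (u, v) := by
    rw [Measure.volume_eq_prod]
    exact integral_prod H hH_int'
  have hK_int : Integrable (fun u => ∫ v, H (u, v)) := hH_int'.integral_prod_left
  -- the dominating function
  set J : ℝ → ℝ := fun u => u^2 * Real.exp (-(1/2) * u^2) with hJ_def
  have hJle : ∀ u : ℝ, J u ≤ 4 * Real.exp (-(1/4) * u^2) := by
    intro u
    have h1 : u^2 ≤ 4 * Real.exp ((1/4)*u^2) := by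
      nlinarith [Real.add_one_le_exp ((1/4)*u^2), Real.exp_pos ((1/4)*u^2)]
    calc J u ≤ (4 * Real.exp ((1/4)*u^2)) * Real.exp (-(1/2)*u^2) :=
          mul_le_mul_of_nonneg_right h1 (Real.exp_pos _).le
      _ = 4 * Real.exp (-(1/4) * u^2) := by
          rw [mul_assoc, ← Real.exp_add]
          ring_nf
  have hJnn : ∀ u : ℝ, 0 ≤ J u := fun u => by simp only [hJ_def]; positivity
  have hexp4 : Integrable (fun u : ℝ => 4 * Real.exp (-(1/4) * u^2)) :=
    (integrable_exp_neg_mul_sq (by norm_num : (0:ℝ) < 1/4)).const_mul 4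
  have hJint : Integrable J := by
    apply Integrable.mono' hexp4
    · apply Continuous.aestronglyMeasurable; fun_prop
    · exact Filter.Eventually.of_forall fun u => by
        rw [Real.norm_eq_abs, abs_of_nonneg (hJnn u)]; exact hJle u
  have hJbound : ∫ u, J u ≤ 4 * Real.sqrt (4*π) := by
    calc ∫ u, J u ≤ ∫ u, 4 * Real.exp (-(1/4) * u^2) :=
          integral_mono hJint hexp4 hJle
      _ = 4 * Real.sqrt (π/(1/4)) := by rw [MeasureTheory.integral_const_mul, integral_gaussian]
      _ = 4 * Real.sqrt (4*π) := by rw [show π/(1/4) = 4*π by ring]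
  -- pointwise bound for the outer integral
  have hKM : ∀ u : ℝ, (∫ v, H (u, v)) ≤ σ^2*ρ/4 * ((Real.sqrt (2*π))⁻¹ * J u) := by
    intro u
    rw [hinner_rw u]
    have habs1 : |Real.tanh (σ*u/2)| ≤ |σ| * |u| / 2 := by
      calc |Real.tanh (σ*u/2)| ≤ |σ*u/2| := abs_tanh_le _
        _ = |σ| * |u| / 2 := by rw [abs_div, abs_mul]; norm_num
    calc Real.tanh (σ*u/2) * (φ u * ∫ w, Real.tanh (σ*(s*w+ρ*u)/2) * φ w)
        ≤ |Real.tanh (σ*u/2) * (φ u * (∫ w, Real.tanh (σ*(s*w+ρ*u)/2) * φ w))| := le_abs_self _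
      _ = |Real.tanh (σ*u/2)| * (φ u * |(∫ w, Real.tanh (σ*(s*w+ρ*u)/2) * φ w)|) := by
          rw [abs_mul, abs_mul, abs_of_nonneg (hφnn u)]
      _ ≤ (|σ| * |u| / 2) * (φ u * (|σ| * ρ * |u| / 2)) := by
          apply mul_le_mul habs1 (mul_le_mul_of_nonneg_left (hinner_le u) (hφnn u))
            (by positivity) (by positivity)
      _ = σ^2*ρ/4 * ((Real.sqrt (2*π))⁻¹ * J u) := by
          rw [show (|σ| * |u| / 2) * (φ u * (|σ| * ρ * |u| / 2))
            = (|σ| * |σ|) * ((|u| * |u|) * (ρ * φ u)) / 4 by ring, abs_mul_abs_self, abs_mul_abs_self,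
            hφ_def, hJ_def]
          ring
  have hM_int : Integrable (fun u : ℝ => σ^2*ρ/4 * ((Real.sqrt (2*π))⁻¹ * J u)) :=
    (hJint.const_mul _).const_mul _
  -- final computation
  have hσρ : 0 ≤ σ^2*ρ := mul_nonneg (sq_nonneg σ) hρ0
  have h36 : Real.sqrt 36 = 6 := by
    rw [show (36:ℝ) = 6^2 by norm_num, Real.sqrt_sq (by norm_num : (0:ℝ) ≤ 6)]
  have h46 : Real.sqrt (4*π) ≤ 6 * Real.sqrt (2*π) := by
    have h' : Real.sqrt (4*π) ≤ Real.sqrt (36*(2*π)) := Real.sqrt_le_sqrt (by nlinarith)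
    rwa [Real.sqrt_mul (by norm_num : (0:ℝ) ≤ 36), h36] at h'
  have h6 : (Real.sqrt (2*π))⁻¹ * Real.sqrt (4*π) ≤ 6 := by
    calc (Real.sqrt (2*π))⁻¹ * Real.sqrt (4*π)
        ≤ (Real.sqrt (2*π))⁻¹ * (6 * Real.sqrt (2*π)) :=
          mul_le_mul_of_nonneg_left h46 (by positivity)
      _ = 6 := by field_simp
  calc ∫ q : ℝ × ℝ, H q = ∫ u, ∫ v, H (u, v) := hH_eq
    _ ≤ ∫ u, σ^2*ρ/4 * ((Real.sqrt (2*π))⁻¹ * J u) := integral_mono hK_int hM_int hKM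
    _ = σ^2*ρ/4 * ((Real.sqrt (2*π))⁻¹ * ∫ u, J u) := by
        rw [MeasureTheory.integral_const_mul, MeasureTheory.integral_const_mul]
    _ ≤ σ^2*ρ/4 * ((Real.sqrt (2*π))⁻¹ * (4 * Real.sqrt (4*π))) := by
        apply mul_le_mul_of_nonneg_left _ (by positivity)
        exact mul_le_mul_of_nonneg_left hJbound (by positivity)
    _ = (σ^2*ρ) * ((Real.sqrt (2*π))⁻¹ * Real.sqrt (4*π)) := by ring
    _ ≤ (σ^2*ρ) * 6 := mul_le_mul_of_nonneg_left h6 hσρ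
    _ = 6 * σ^2 * ρ := by ring
end
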